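/- Let 1 ≤ m ≤ ℓ be integers with ℓ < ℓ*. If G²_{ℓ−1}(a) > G²_ℓ(ℓw) − (ℓw − a)·(1 + ℓw/σ) for every a ∈ [(ℓ−1)w, 4(ℓ−1)], then also G²_{m−1}(a) > G²_m(mw) − (mw − a)·(1 + mw/σ) for every a ∈ [(m−1)w, 4(m−1)] (with the convention G²_0(0) = 0 when m = 1 or ℓ = 1). -/
import Mathlib

/-- Surface tension of the type-2 stack of `ℓ` layers and area `a`:
`τ²_ℓ(a) = 8ℓ − 2√((4ℓ−a)(4−w)ℓ)`. -/
noncomputable def tau2 (w : ℝ) (ℓ : ℕ) (a : ℝ) : ℝ :=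
  8 * (ℓ : ℝ) - 2 * Real.sqrt ((4 * (ℓ : ℝ) - a) * ((4 - w) * (ℓ : ℝ)))

/-- `G²_ℓ(a) = τ²_ℓ(a) + a²/(2σ)` (the finite branch).  Note that `G²_0(0) = 0`. -/
noncomputable def G2 (w σ : ℝ) (ℓ : ℕ) (a : ℝ) : ℝ :=
  tau2 w ℓ a + a ^ 2 / (2 * σ)

lemma sqrt_key (t c C : ℝ) (ht : 0 ≤ t) (htc : t ≤ c) (hcC : c ≤ C) :
    C - c + Real.sqrt (c * (c - t)) ≤ Real.sqrt (C * (C - t)) := by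
  have hs0 : 0 ≤ Real.sqrt (c * (c - t)) := Real.sqrt_nonneg _
  have harg : 0 ≤ c * (c - t) := mul_nonneg (ht.trans htc) (by linarith)
  have hsq : (Real.sqrt (c * (c - t))) ^ 2 = c * (c - t) := Real.sq_sqrt harg
  have hub : Real.sqrt (c * (c - t)) ≤ c - t / 2 := by
    have h1 : Real.sqrt (c * (c - t)) ≤ Real.sqrt ((c - t/2)^2) :=
      Real.sqrt_le_sqrt (by nlinarith)
    rwa [Real.sqrt_sq (by linarith)] at h1
  calc C - c + Real.sqrt (c * (c - t))
      = Real.sqrt ((C - c + Real.sqrt (c * (c - t)))^2) :=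
        (Real.sqrt_sq (by linarith)).symm
    _ ≤ Real.sqrt (C * (C - t)) := Real.sqrt_le_sqrt (by nlinarith)

/-- for integers `1 ≤ m ≤ ℓ` with `ℓ < ℓ*`, if
`G²_{ℓ−1}(a) > G²_ℓ(ℓw) − (ℓw − a)(1 + ℓw/σ)` on `[(ℓ−1)w, 4(ℓ−1)]`, then also
`G²_{m−1}(a) > G²_m(mw) − (mw − a)(1 + mw/σ)` on `[(m−1)w, 4(m−1)]`. -/
theorem sticking_out_monotone (w σ : ℝ) (hw0 : 0 < w) (hw4 : w < 4) (hσ : 0 < σ)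
    (hnd : ∀ n : ℕ, (n : ℝ) ≠ 4 / (4 - w))
    (m ℓ : ℕ) (hm : 1 ≤ m) (hmℓ : m ≤ ℓ) (hℓstar : (ℓ : ℝ) < 4 / (4 - w))
    (h : ∀ a ∈ Set.Icc (((ℓ : ℝ) - 1) * w) (4 * ((ℓ : ℝ) - 1)),
      G2 w σ ℓ ((ℓ : ℝ) * w) - ((ℓ : ℝ) * w - a) * (1 + (ℓ : ℝ) * w / σ)
        < G2 w σ (ℓ - 1) a) :
    ∀ a ∈ Set.Icc (((m : ℝ) - 1) * w) (4 * ((m : ℝ) - 1)),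
      G2 w σ m ((m : ℝ) * w) - ((m : ℝ) * w - a) * (1 + (m : ℝ) * w / σ)
        < G2 w σ (m - 1) a := by
  intro a ha
  obtain ⟨ha1, ha2⟩ := ha
  have hℓ1 : 1 ≤ ℓ := hm.trans hmℓ
  have hm' : (1:ℝ) ≤ (m:ℝ) := by exact_mod_cast hm
  have hℓ' : (1:ℝ) ≤ (ℓ:ℝ) := by exact_mod_cast hℓ1
  have hmℓ' : (m:ℝ) ≤ (ℓ:ℝ) := by exact_mod_cast hmℓ
  have hcastm : ((m - 1 : ℕ) : ℝ) = (m:ℝ) - 1 := by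
    rw [Nat.cast_sub hm]; norm_num
  have hcastℓ : ((ℓ - 1 : ℕ) : ℝ) = (ℓ:ℝ) - 1 := by
    rw [Nat.cast_sub hℓ1]; norm_num
  set t : ℝ := a - ((m:ℝ) - 1) * w with htdef
  set c : ℝ := (4 - w) * ((m:ℝ) - 1) with hcdef
  set C : ℝ := (4 - w) * ((ℓ:ℝ) - 1) with hCdef
  have ht0 : 0 ≤ t := by simp only [htdef]; linarith
  have htc : t ≤ c := by simp only [htdef, hcdef]; nlinarith
  have hcC : c ≤ C := by
    apply mul_le_mul_of_nonneg_left (by linarith) (by linarith)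
  set a' : ℝ := ((ℓ:ℝ) - 1) * w + t with ha'def
  have ha'mem : a' ∈ Set.Icc (((ℓ : ℝ) - 1) * w) (4 * ((ℓ : ℝ) - 1)) := by
    constructor
    · simp only [ha'def]; linarith
    · simp only [ha'def, hCdef] at *; nlinarith
  have hkey := sqrt_key t c C ht0 htc hcC
  have hsqm : Real.sqrt ((4 * (m:ℝ) - (m:ℝ) * w) * ((4 - w) * (m:ℝ)))
      = (4 - w) * (m:ℝ) := by
    rw [show (4 * (m:ℝ) - (m:ℝ) * w) * ((4 - w) * (m:ℝ)) = ((4 - w) * (m:ℝ))^2 by ring]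
    exact Real.sqrt_sq (by nlinarith)
  have hsqℓ : Real.sqrt ((4 * (ℓ:ℝ) - (ℓ:ℝ) * w) * ((4 - w) * (ℓ:ℝ)))
      = (4 - w) * (ℓ:ℝ) := by
    rw [show (4 * (ℓ:ℝ) - (ℓ:ℝ) * w) * ((4 - w) * (ℓ:ℝ)) = ((4 - w) * (ℓ:ℝ))^2 by ring]
    exact Real.sqrt_sq (by nlinarith)
  have hh := h a' ha'mem
  simp only [G2, tau2, hcastℓ, hsqℓ] at hh
  simp only [G2, tau2, hcastm, hsqm]
  have hargm : (4 * ((m:ℝ) - 1) - a) * ((4 - w) * ((m:ℝ) - 1)) = c * (c - t) := by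
    simp only [htdef, hcdef]; ring
  have hargℓ : (4 * ((ℓ:ℝ) - 1) - a') * ((4 - w) * ((ℓ:ℝ) - 1)) = C * (C - t) := by
    simp only [ha'def, hCdef]; ring
  rw [hargm]
  rw [hargℓ] at hh
  -- identity relating the non-sqrt parts
  have hσ' : (2 : ℝ) * σ ≠ 0 := by positivity
  have hid :
      (8 * (m:ℝ) - 2 * ((4 - w) * (m:ℝ)) + ((m:ℝ) * w) ^ 2 / (2 * σ)
        - ((m:ℝ) * w - a) * (1 + (m:ℝ) * w / σ)) - (8 * ((m:ℝ) - 1) + a ^ 2 / (2 * σ))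
      = (8 * (ℓ:ℝ) - 2 * ((4 - w) * (ℓ:ℝ)) + ((ℓ:ℝ) * w) ^ 2 / (2 * σ)
        - ((ℓ:ℝ) * w - a') * (1 + (ℓ:ℝ) * w / σ)) - (8 * ((ℓ:ℝ) - 1) + a' ^ 2 / (2 * σ))
        + 2 * (C - c) := by
    simp only [ha'def, htdef, hCdef, hcdef]
    field_simp
    ring
  linarith [hh, hkey, hid]
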